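/- Let p > 0, N ≥ 2, equal weights wᵢ = 1/N, and let Ẽ_N^p be the unconfined p-approximated discrete Keller–Segel energy on U = {x ∈ ℝ^N : x₁ < ⋯ < x_N}. If χ > χ₂(N) := 1 + 1/(N−1), then there exists no map x : [0,∞) → U with differentiable coordinates satisfying (1/N) xᵢ'(t) = −(∂Ẽ_N^p/∂xᵢ)(x(t)) for every t ≥ 0 and every i; in other words, every solution of the p-approximated discrete Keller–Segel gradient flow blows up in finite time. -/

import Mathlib

open Real Finset

/-- `rᵢᵖ = min_p(Δxᵢ, Δxᵢ₊₁) = ((Δxᵢ^{−p} + Δxᵢ₊₁^{−p})/2)^{−1/p}`, with the boundary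
convention `r₁ᵖ = 2^{1/p} Δx₂` and `r_Nᵖ = 2^{1/p} Δx_N`, for `N = n + 2` particles
indexed from `0` to `n+1`. -/
noncomputable def rballp (p : ℝ) (n : ℕ) (x : Fin (n + 2) → ℝ) (i : Fin (n + 2)) : ℝ :=
  if i.val = 0 then (2 : ℝ) ^ (1 / p) * (x 1 - x 0)
  else if i.val = n + 1 then (2 : ℝ) ^ (1 / p) * (x i - x (i - 1))
  else (((x i - x (i - 1)) ^ (-p) + (x (i + 1) - x i) ^ (-p)) / 2) ^ (-1 / p)

/-- The unconfined `p`-approximated discrete modified Keller–Segel energy with equal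
weights `wᵢ = 1/N`, `N = n + 2`:
`Ẽ_N^p(x) = Σᵢ (1/N) log(1/(N rᵢᵖ)) + (χ/N²) Σᵢ Σ_{j≠i} log|xᵢ − xⱼ|`. -/
noncomputable def kspEnergy (p : ℝ) (n : ℕ) (χ : ℝ) (x : Fin (n + 2) → ℝ) : ℝ :=
  ∑ i, (1 / ((n : ℝ) + 2)) * Real.log (1 / (((n : ℝ) + 2) * rballp p n x i)) +
    (χ / ((n : ℝ) + 2) ^ 2) * ∑ i, ∑ j ∈ Finset.univ.erase i, Real.log |x i - x j|

/-!
A dilation `x ↦ c • x` multiplies every `rᵢᵖ` and every `|xᵢ - xⱼ|` by `c`, so it shifts the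
energy by `(χ (N - 1) / N - 1) log c`. Differentiating at `c = 1` gives Euler's identity
`∇Ẽ(x) · x = χ (N - 1) / N - 1`, which is positive exactly when `χ > χ₂(N)`. Along the flow the
second moment `∑ xᵢ²` then has the constant derivative `-2N (χ (N - 1) / N - 1) < 0`, so it
would become negative in finite time.
-/

lemma hasDerivAt_sum_sq {m : Type*} [Fintype m] {γ : ℝ → m → ℝ} {v : m → ℝ} {t : ℝ}
    (hγ : ∀ i, HasDerivAt (fun s => γ s i) (v i) t) :
    HasDerivAt (fun s => ∑ i, γ s i ^ 2) (2 * ∑ i, γ t i * v i) t := by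
  rw [Finset.mul_sum]
  exact HasDerivAt.fun_sum fun i _ =>
    ((hγ i).fun_pow 2).congr_deriv (by norm_num [mul_assoc])

lemma ContinuousLinearMap.apply_eq_sum_single {m : Type*} [Fintype m] [DecidableEq m]
    (L : (m → ℝ) →L[ℝ] ℝ) (y : m → ℝ) : L y = ∑ i, y i * L (Pi.single i 1) := by
  conv_lhs => rw [← Finset.univ_sum_single y]
  simp only [map_sum]
  refine Finset.sum_congr rfl fun i _ => ?_
  rw [← smul_eq_mul, ← map_smul, ← Pi.single_smul, smul_eq_mul, mul_one]

lemma exists_neg_of_hasDerivAt_neg_const {f : ℝ → ℝ} {a : ℝ} (ha : a < 0)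
    (hf : ∀ t, 0 ≤ t → HasDerivAt f a t) : ∃ t, 0 ≤ t ∧ f t < 0 := by
  set T := (|f 0| + 1) / -a
  have hT : 0 < T := div_pos (by positivity) (neg_pos.2 ha)
  obtain ⟨-, -, hslope⟩ := exists_hasDerivAt_eq_slope f (fun _ => a) hT
    (fun s hs => (hf s hs.1).continuousAt.continuousWithinAt) (fun s hs => hf s hs.1.le)
  refine ⟨T, hT.le, ?_⟩
  rw [sub_zero, eq_div_iff hT.ne'] at hslope
  have haT : a * T = -(|f 0| + 1) := by
    simp only [T]
    field_simp [ha.ne]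
  linarith [le_abs_self (f 0)]

lemma fderiv_apply_self_of_log_homogeneous {E : Type*} [NormedAddCommGroup E] [NormedSpace ℝ E]
    {f : E → ℝ} {x : E} {a : ℝ} (hf : DifferentiableAt ℝ f x)
    (hscale : ∀ c : ℝ, 0 < c → f (c • x) = f x + a * Real.log c) :
    fderiv ℝ f x x = a := by
  have hray : HasDerivAt (fun c : ℝ => f (c • x)) (fderiv ℝ f x x) 1 := by
    have hline : HasDerivAt (fun c : ℝ => c • x) x 1 := by
      simpa using (hasDerivAt_id (1 : ℝ)).smul_const x
    exact hf.hasFDerivAt.comp_hasDerivAt_of_eq (1 : ℝ) hline (one_smul ℝ x).symm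
  have hlog : HasDerivAt (fun c : ℝ => f x + a * Real.log c) a 1 := by
    simpa using ((Real.hasDerivAt_log one_ne_zero).const_mul a).const_add (f x)
  refine hray.unique (hlog.congr_of_eventuallyEq ?_)
  filter_upwards [eventually_gt_nhds one_pos] with c hc using hscale c hc

lemma powerMean_mul_left {p a b c : ℝ} (hp : p ≠ 0) (ha : 0 ≤ a) (hb : 0 ≤ b) (hc : 0 < c) :
    (((c * a) ^ (-p) + (c * b) ^ (-p)) / 2) ^ (-1 / p)
      = c * ((a ^ (-p) + b ^ (-p)) / 2) ^ (-1 / p) := by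
  have hmean : 0 ≤ (a ^ (-p) + b ^ (-p)) / 2 := by positivity
  rw [Real.mul_rpow hc.le ha, Real.mul_rpow hc.le hb, ← mul_add, mul_div_assoc,
    Real.mul_rpow (by positivity) hmean, ← Real.rpow_mul hc.le,
    show -p * (-1 / p) = 1 by field_simp, Real.rpow_one]

section KellerSegel

variable {p : ℝ} {n : ℕ} {x : Fin (n + 2) → ℝ}

lemma sub_pred_pos (hx : StrictMono x) {i : Fin (n + 2)} (hi : i.val ≠ 0) :
    0 < x i - x (i - 1) :=
  sub_pos.2 (hx (Fin.sub_one_lt_iff.2 (Fin.pos_iff_ne_zero.2 (Fin.val_ne_zero_iff.1 hi))))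

lemma succ_sub_pos (hx : StrictMono x) {i : Fin (n + 2)} (hi : i.val ≠ n + 1) :
    0 < x (i + 1) - x i :=
  sub_pos.2 (hx (Fin.lt_add_one_iff.2 (by simp [Fin.lt_def]; omega)))

lemma rballp_pos (hx : StrictMono x) (i : Fin (n + 2)) : 0 < rballp p n x i := by
  unfold rballp
  split_ifs with h0 hlast
  · exact mul_pos (by positivity) (sub_pos.2 (hx (by simp)))
  · exact mul_pos (by positivity) (sub_pred_pos hx h0)
  · have h₁ := sub_pred_pos hx h0
    have h₂ := succ_sub_pos hx hlast
    positivity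

lemma rballp_smul (hp : p ≠ 0) (hx : StrictMono x) {c : ℝ} (hc : 0 < c) (i : Fin (n + 2)) :
    rballp p n (c • x) i = c * rballp p n x i := by
  have hgap : ∀ j k, (c • x) j - (c • x) k = c * (x j - x k) := fun j k => by simp [mul_sub]
  unfold rballp
  split_ifs with h0 hlast
  · rw [hgap]; ring
  · rw [hgap]; ring
  · rw [hgap, hgap, powerMean_mul_left hp (sub_pred_pos hx h0).le (succ_sub_pos hx hlast).le hc]

lemma differentiableAt_rballp (hx : StrictMono x) (i : Fin (n + 2)) :
    DifferentiableAt ℝ (fun y => rballp p n y i) x := by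
  by_cases h0 : i.val = 0
  · simp only [rballp, if_pos h0]
    fun_prop
  by_cases hlast : i.val = n + 1
  · simp only [rballp, if_neg h0, if_pos hlast]
    fun_prop
  simp only [rballp, if_neg h0, if_neg hlast]
  have h₁ := sub_pred_pos hx h0
  have h₂ := succ_sub_pos hx hlast
  refine DifferentiableAt.rpow_const ?_ (Or.inl (by positivity))
  fun_prop (disch := positivity)

lemma differentiableAt_kspEnergy (hx : StrictMono x) (χ : ℝ) :
    DifferentiableAt ℝ (kspEnergy p n χ) x := by
  unfold kspEnergy
  refine (DifferentiableAt.fun_sum fun i _ => ?_).add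
    ((DifferentiableAt.fun_sum fun i _ => DifferentiableAt.fun_sum fun j hj => ?_).const_mul _)
  · have := differentiableAt_rballp (p := p) hx i
    have := rballp_pos (p := p) hx i
    fun_prop (disch := positivity)
  · have hij : x i - x j ≠ 0 :=
      sub_ne_zero.2 (hx.injective.ne (Finset.ne_of_mem_erase hj).symm)
    exact ((by fun_prop : DifferentiableAt ℝ (fun y : Fin (n + 2) → ℝ => y i - y j) x).abs
      hij).log (abs_ne_zero.2 hij)

lemma kspEnergy_smul (hp : p ≠ 0) (hx : StrictMono x) (χ : ℝ) {c : ℝ} (hc : 0 < c) :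
    kspEnergy p n χ (c • x)
      = kspEnergy p n χ x + (χ * ((n : ℝ) + 1) / ((n : ℝ) + 2) - 1) * Real.log c := by
  have hself : ∀ i, Real.log (1 / (((n : ℝ) + 2) * rballp p n (c • x) i))
      = Real.log (1 / (((n : ℝ) + 2) * rballp p n x i)) - Real.log c := by
    intro i
    have := rballp_pos (p := p) hx i
    simp only [one_div, Real.log_inv, rballp_smul hp hx hc, mul_left_comm _ c]
    rw [Real.log_mul hc.ne' (by positivity)]
    ring
  have hpair : ∀ i, ∀ j ∈ Finset.univ.erase i, Real.log |(c • x) i - (c • x) j|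
      = Real.log |x i - x j| + Real.log c := by
    intro i j hj
    have hij : x i - x j ≠ 0 :=
      sub_ne_zero.2 (hx.injective.ne (Finset.ne_of_mem_erase hj).symm)
    rw [Pi.smul_apply, Pi.smul_apply, smul_eq_mul, smul_eq_mul, ← mul_sub, abs_mul,
      abs_of_pos hc, Real.log_mul hc.ne' (abs_ne_zero.2 hij), add_comm]
  unfold kspEnergy
  simp only [hself, Finset.sum_congr rfl (hpair _), mul_sub, Finset.sum_sub_distrib,
    Finset.sum_add_distrib, Finset.sum_const, Finset.card_erase_of_mem (Finset.mem_univ _),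
    Finset.card_univ, Fintype.card_fin, nsmul_eq_mul]
  push_cast
  field_simp
  ring

lemma fderiv_kspEnergy_apply_self (hp : p ≠ 0) (hx : StrictMono x) (χ : ℝ) :
    fderiv ℝ (kspEnergy p n χ) x x = χ * ((n : ℝ) + 1) / ((n : ℝ) + 2) - 1 :=
  fderiv_apply_self_of_log_homogeneous (differentiableAt_kspEnergy hx χ)
    fun _ hc => kspEnergy_smul hp hx χ hc

end KellerSegel

/-- if `χ > χ₂(N) = 1 + 1/(N−1)`, then there is no global-in-time solution
`x : [0,∞) → U` of the `p`-approximated discrete unconfined Keller–Segel gradient flow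
`(1/N) xᵢ' = −∂Ẽ_N^p/∂xᵢ`; i.e., every solution blows up in finite time. -/
theorem ksp_blow_up (p : ℝ) (hp : 0 < p) (n : ℕ) (χ : ℝ)
    (hχ : 1 + 1 / ((n : ℝ) + 1) < χ) :
    ¬ ∃ x : ℝ → Fin (n + 2) → ℝ,
      ∀ t : ℝ, 0 ≤ t → (StrictMono (x t) ∧ ∀ i : Fin (n + 2),
        HasDerivAt (fun s => x s i)
          (-((n : ℝ) + 2) * fderiv ℝ (kspEnergy p n χ) (x t) (Pi.single i 1)) t) := by
  rintro ⟨x, hx⟩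
  set a := χ * ((n : ℝ) + 1) / ((n : ℝ) + 2) - 1 with ha_def
  have ha : 0 < a := by
    rw [show 1 + 1 / ((n : ℝ) + 1) = ((n : ℝ) + 2) / ((n : ℝ) + 1) by field_simp; ring,
      div_lt_iff₀ (by positivity)] at hχ
    rw [sub_pos, one_lt_div (by positivity)]
    linarith
  have hmoment : ∀ t, 0 ≤ t →
      HasDerivAt (fun s => ∑ i, x s i ^ 2) (-(2 * ((n : ℝ) + 2) * a)) t := by
    intro t ht
    obtain ⟨hmono, hflow⟩ := hx t ht
    set L := fderiv ℝ (kspEnergy p n χ) (x t)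
    have heuler := fderiv_kspEnergy_apply_self hp.ne' hmono χ
    rw [ContinuousLinearMap.apply_eq_sum_single] at heuler
    refine (hasDerivAt_sum_sq hflow).congr_deriv ?_
    calc 2 * ∑ i, x t i * (-((n : ℝ) + 2) * L (Pi.single i 1))
        = -(2 * ((n : ℝ) + 2)) * ∑ i, x t i * L (Pi.single i 1) := by
          rw [Finset.mul_sum, Finset.mul_sum]
          exact Finset.sum_congr rfl fun i _ => by ring
      _ = -(2 * ((n : ℝ) + 2) * a) := by rw [heuler, ← ha_def]; ring
  obtain ⟨t, -, hneg⟩ :=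
    exists_neg_of_hasDerivAt_neg_const (neg_neg_of_pos (by positivity)) hmoment
  exact hneg.not_ge (Finset.sum_nonneg fun i _ => sq_nonneg _)
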